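/- Let $L_1 > L_2 > 0$ be real numbers, $T \geq 1$ a real number with $T < L_1 + L_2$, and $p \in [0,1]$. Define $R_1 = p^2 T + p(1-p)(\min(T, L_1) + \min(T-1, L_2))$, $R_2 = p^2 T + p(1-p)(\min(T, L_2) + \min(T-1, L_1))$, $R_3 = p^2 T + \frac{p(1-p)}{2}(\min(T,L_1) + \min(T,L_2) + \min(T-1,L_1) + \min(T-1,L_2))$, and $R_4 = p^2 T + \frac{p(1-p)}{L_1+L_2}(L_1(\min(T,L_1) + \min(T-1,L_2)) + L_2(\min(T,L_2) + \min(T-1,L_1)))$. Then $R_1 \geq R_4 \geq R_3 \geq R_2$. -/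
import Mathlib


theorem two_arm_policy_ordering
    (L₁ L₂ T p : ℝ) (hL : L₁ > L₂) (hL2 : L₂ > 0) (hT : 1 ≤ T)
    (hTlt : T < L₁ + L₂) (hp : p ∈ Set.Icc (0:ℝ) 1)
    (R₁ R₂ R₃ R₄ : ℝ)
    (hR₁ : R₁ = p^2 * T + p*(1-p) * (min T L₁ + min (T-1) L₂))
    (hR₂ : R₂ = p^2 * T + p*(1-p) * (min T L₂ + min (T-1) L₁))
    (hR₃ : R₃ = p^2 * T + p*(1-p)/2 *
      (min T L₁ + min T L₂ + min (T-1) L₁ + min (T-1) L₂))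
    (hR₄ : R₄ = p^2 * T + p*(1-p)/(L₁+L₂) *
      (L₁ * (min T L₁ + min (T-1) L₂) + L₂ * (min T L₂ + min (T-1) L₁))) :
    R₁ ≥ R₄ ∧ R₄ ≥ R₃ ∧ R₃ ≥ R₂ := by
  obtain ⟨hp0, hp1⟩ := hp
  have hq : 0 ≤ p * (1 - p) := mul_nonneg hp0 (by linarith)
  have hw : (0:ℝ) < L₁ + L₂ := by linarith
  have hAB : min T L₂ + min (T-1) L₁ ≤ min T L₁ + min (T-1) L₂ := by
    rcases le_total T L₁ with h1 | h1 <;> rcases le_total T L₂ with h2 | h2 <;>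
      rcases le_total (T-1) L₁ with h3 | h3 <;> rcases le_total (T-1) L₂ with h4 | h4 <;>
      simp [min_eq_left, min_eq_right, *] <;> linarith
  set A := min T L₁ + min (T-1) L₂ with hA
  set B := min T L₂ + min (T-1) L₁ with hB
  have hD : p*(1-p)/(L₁+L₂) * (L₁+L₂) = p*(1-p) := div_mul_cancel₀ _ (ne_of_gt hw)
  have hD0 : 0 ≤ p*(1-p)/(L₁+L₂) := div_nonneg hq hw.le
  set D := p*(1-p)/(L₁+L₂) with hDdef
  have e1 : p*(1-p) * A - D * (L₁ * A + L₂ * B) = D * L₂ * (A - B) := by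
    rw [← hD]; ring
  have e2 : 2 * (D * (L₁ * A + L₂ * B)) - p*(1-p) * (A + B) = D * (L₁ - L₂) * (A - B) := by
    rw [← hD]; ring
  have n1 : 0 ≤ D * L₂ * (A - B) :=
    mul_nonneg (mul_nonneg hD0 hL2.le) (sub_nonneg.2 hAB)
  have n2 : 0 ≤ D * (L₁ - L₂) * (A - B) :=
    mul_nonneg (mul_nonneg hD0 (by linarith)) (sub_nonneg.2 hAB)
  have n3 : 0 ≤ p*(1-p) * (A - B) := mul_nonneg hq (sub_nonneg.2 hAB)
  have hsum : min T L₁ + min T L₂ + min (T-1) L₁ + min (T-1) L₂ = A + B := by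
    rw [hA, hB]; ring
  clear_value A B D
  refine ⟨?_, ?_, ?_⟩
  · rw [hR₁, hR₄]; linarith [e1, n1]
  · rw [hR₄, hR₃, hsum]; nlinarith [e2, n2, n3, hD]
  · rw [hR₃, hR₂, hsum]; nlinarith [n3]
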